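/- arXiv:2201.01238 — 3 statements merged into one kernel-verified Lean document; each statement's English description precedes it below -/
import Mathlib

section
/- Let G be a group, H, K subgroups, φ : H → ℂˣ, ψ : K → ℂˣ characters, and g ∈ G such that the triple [(K,ψ), g, (H,φ)] is admissible. Then there exists a (unique) homomorphism of left ℂ[G]-modules F_g : ℂ[G] ⊗_{ℂ[K]} ℂ_ψ → ℂ[G] ⊗_{ℂ[H]} ℂ_φ satisfying F_g(x ⊗ v) = xg⁻¹ ⊗ v for all x ∈ G and v ∈ ℂ. -/
noncomputable section

/-- A triple `[(K,ψ), g, (H,φ)]` is *admissible* if `K ≤ g⁻¹ H g` (i.e. `g k g⁻¹ ∈ H`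
for all `k ∈ K`) and `ψ(k) = φ(h)` whenever `k = g⁻¹ h g` with `h ∈ H`, `k ∈ K`. -/
def IsAdmissibleTriple {G : Type*} [Group G] (K H : Subgroup G)
    (ψ : K →* ℂˣ) (φ : H →* ℂˣ) (g : G) : Prop :=
  (∀ k ∈ K, g * k * g⁻¹ ∈ H) ∧
  ∀ (k h : G) (hk : k ∈ K) (hh : h ∈ H), k = g⁻¹ * h * g → ψ ⟨k, hk⟩ = φ ⟨h, hh⟩

/-- The submodule of relations defining `ℂ[G] ⊗_{ℂ[H]} ℂ_φ`: the left ideal of `ℂ[G]`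
generated by the elements `h - φ(h)·1` for `h ∈ H`. -/
def inducedRel {G : Type*} [Group G] (H : Subgroup G) (φ : H →* ℂˣ) :
    Submodule (MonoidAlgebra ℂ G) (MonoidAlgebra ℂ G) :=
  Submodule.span (MonoidAlgebra ℂ G)
    {a | ∃ h : H, a = MonoidAlgebra.single (h : G) 1 - MonoidAlgebra.single 1 ((φ h : ℂ))}

/-- The induced left `ℂ[G]`-module `ℂ[G] ⊗_{ℂ[H]} ℂ_φ`, realized as the quotient of
`ℂ[G]` by `inducedRel H φ`; the class of `single x v` corresponds to `x ⊗ v`. -/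
abbrev InducedModule {G : Type*} [Group G] (H : Subgroup G) (φ : H →* ℂˣ) :=
  MonoidAlgebra ℂ G ⧸ inducedRel H φ

/-- If `[(K,ψ), g, (H,φ)]` is admissible, then there is a unique
homomorphism of left `ℂ[G]`-modules
`F_g : ℂ[G] ⊗_{ℂ[K]} ℂ_ψ → ℂ[G] ⊗_{ℂ[H]} ℂ_φ` with `F_g (x ⊗ v) = x g⁻¹ ⊗ v`
for all `x ∈ G`, `v ∈ ℂ`. -/
theorem statement4 {G : Type*} [Group G] (H K : Subgroup G)
    (φ : H →* ℂˣ) (ψ : K →* ℂˣ) (g : G)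
    (hadm : IsAdmissibleTriple K H ψ φ g) :
    ∃! F : InducedModule K ψ →ₗ[MonoidAlgebra ℂ G] InducedModule H φ,
      ∀ (x : G) (v : ℂ),
        F (Submodule.Quotient.mk (MonoidAlgebra.single x v))
          = Submodule.Quotient.mk (MonoidAlgebra.single (x * g⁻¹) v) := by
  obtain ⟨had1, had2⟩ := hadm
  let a : MonoidAlgebra ℂ G := MonoidAlgebra.single g⁻¹ (1:ℂ)
  let f : MonoidAlgebra ℂ G →ₗ[MonoidAlgebra ℂ G] MonoidAlgebra ℂ G :=
    { toFun := fun x => x * a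
      map_add' := fun x y => add_mul x y a
      map_smul' := fun c x => by simp [smul_eq_mul, mul_assoc] }
  have hker : inducedRel K ψ ≤ LinearMap.ker ((inducedRel H φ).mkQ.comp f) := by
    rw [inducedRel, Submodule.span_le]
    rintro s ⟨k, rfl⟩
    have hH : g * (k : G) * g⁻¹ ∈ H := had1 k k.2
    have hval : ψ k = φ ⟨g * (k : G) * g⁻¹, hH⟩ := by
      refine had2 (k : G) (g * (k : G) * g⁻¹) k.2 hH ?_
      group
    have hmem : (MonoidAlgebra.single ((⟨g * (k : G) * g⁻¹, hH⟩ : H) : G) (1:ℂ)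
        - MonoidAlgebra.single 1 ((φ ⟨g * (k : G) * g⁻¹, hH⟩ : ℂ))) ∈ inducedRel H φ := by
      apply Submodule.subset_span
      exact ⟨⟨g * (k : G) * g⁻¹, hH⟩, rfl⟩
    have hmem2 := Submodule.smul_mem (inducedRel H φ) a hmem
    simp only [SetLike.mem_coe, LinearMap.mem_ker, LinearMap.coe_comp, Function.comp_apply,
      LinearMap.coe_mk, AddHom.coe_mk, Submodule.mkQ_apply, Submodule.Quotient.mk_eq_zero]
    have : (MonoidAlgebra.single ((k : G)) (1:ℂ) - MonoidAlgebra.single 1 ((ψ k : ℂ))) * a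
        = a • (MonoidAlgebra.single ((⟨g * (k : G) * g⁻¹, hH⟩ : H) : G) (1:ℂ)
        - MonoidAlgebra.single 1 ((φ ⟨g * (k : G) * g⁻¹, hH⟩ : ℂ))) := by
      rw [smul_eq_mul, sub_mul, mul_sub, ← hval]
      simp only [a, MonoidAlgebra.single_mul_single, one_mul, mul_one]
      congr 2
      group
    show (MonoidAlgebra.single ((k : G)) (1:ℂ) - MonoidAlgebra.single 1 ((ψ k : ℂ))) * a
        ∈ inducedRel H φ
    rw [this]
    exact hmem2
  let F₀ : InducedModule K ψ →ₗ[MonoidAlgebra ℂ G] InducedModule H φ :=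
    Submodule.liftQ _ ((inducedRel H φ).mkQ.comp f) hker
  have hF₀ : ∀ (x : G) (v : ℂ),
      F₀ (Submodule.Quotient.mk (MonoidAlgebra.single x v))
        = Submodule.Quotient.mk (MonoidAlgebra.single (x * g⁻¹) v) := by
    intro x v
    show Submodule.Quotient.mk (MonoidAlgebra.single x v * a) = _
    simp [a, MonoidAlgebra.single_mul_single]
  refine ⟨F₀, hF₀, ?_⟩
  intro F' hF'
  apply Submodule.linearMap_qext
  apply LinearMap.ext_ring
  show F' (Submodule.Quotient.mk (1 : MonoidAlgebra ℂ G)) = F₀ (Submodule.Quotient.mk 1)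
  rw [MonoidAlgebra.one_def, hF' 1 1, hF₀ 1 1]
end
end

section
/- Let R be an associative algebra over ℂ, and let E₁ and E₂ be simple left R-modules each of which is finite-dimensional as a ℂ-vector space (with the ℂ-action induced by restriction of scalars along ℂ → R). If for every r ∈ R the trace of the ℂ-linear endomorphism (r · -) : E₁ → E₁ equals the trace of (r · -) : E₂ → E₂, then E₁ and E₂ are isomorphic as R-modules. -/
/-!
If `E₁ ≇ E₂`, Schur's lemma makes every `R`-endomorphism of the semisimple module `E₁ × E₂`
commute with the projection onto `E₂`. Since `E₁ × E₂` is finite-dimensional over `ℂ`, the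
Jacobson density theorem realises this projection as the action of some `r : R`. Then
`r` acts as `0` on `E₁` and as the identity on `E₂`, so its traces are `0` and `dim E₂ ≠ 0`.
-/

noncomputable section

/-- For `R` a `ℂ`-algebra and `E` an `R`-module whose `ℂ`-action is the restriction of
the `R`-action along `ℂ → R`, left multiplication by `r : R` is a `ℂ`-linear
endomorphism of `E`. -/
def smulLeftMap {R : Type*} (E : Type*) [Ring R] [Algebra ℂ R] [AddCommGroup E]
    [Module R E] [Module ℂ E] [IsScalarTower ℂ R E] (r : R) : E →ₗ[ℂ] E where
  toFun x := r • x
  map_add' := smul_add r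
  map_smul' c x := by
    simp only [RingHom.id_apply]
    rw [← algebraMap_smul R c x, ← algebraMap_smul R c (r • x), smul_smul, smul_smul,
      Algebra.commutes]

section

open LinearMap

instance IsSemisimpleModule.prod {R M N : Type*} [Ring R] [AddCommGroup M] [Module R M]
    [AddCommGroup N] [Module R N] [IsSemisimpleModule R M] [IsSemisimpleModule R N] :
    IsSemisimpleModule R (M × N) :=
  isSemisimpleModule_of_isSemisimpleModule_submodule'
    (p := fun b : Bool => b.rec (range (inr R M N)) (range (inl R M N)))
    (by rintro (_ | _) <;> exact .range _)
    (by rw [iSup_bool_eq]; exact sup_range_inl_inr)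

variable {R M N : Type*} [Ring R] [AddCommGroup M] [Module R M] [AddCommGroup N] [Module R N]

theorem LinearMap.eq_zero_of_not_nonempty_linearEquiv [IsSimpleModule R M] [IsSimpleModule R N]
    (h : ¬Nonempty (M ≃ₗ[R] N)) (f : M →ₗ[R] N) : f = 0 := by
  by_contra hf
  exact h ⟨.ofBijective f (bijective_of_ne_zero hf)⟩

theorem Module.End.commute_inr_comp_snd [IsSimpleModule R M] [IsSimpleModule R N]
    (h : ¬Nonempty (M ≃ₗ[R] N)) (g : Module.End R (M × N)) :
    Commute g (inr R M N ∘ₗ snd R M N) := by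
  have hMN := eq_zero_of_not_nonempty_linearEquiv h (snd R M N ∘ₗ g ∘ₗ inl R M N)
  have hNM := eq_zero_of_not_nonempty_linearEquiv (fun ⟨e⟩ => h ⟨e.symm⟩)
    (fst R M N ∘ₗ g ∘ₗ inr R M N)
  refine prod_ext (LinearMap.ext fun x => ?_) (LinearMap.ext fun y => ?_)
  · have hx : (g (x, 0)).2 = 0 := LinearMap.congr_fun hMN x
    simp [Module.End.mul_apply, hx, Prod.mk_zero_zero]
  · have hy : (g (0, y)).1 = 0 := LinearMap.congr_fun hNM y
    simp [Module.End.mul_apply, Prod.ext_iff, hy]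

theorem exists_smul_eq_of_isSemisimpleModule (k : Type*) [CommSemiring k] [Algebra k R]
    [Module k M] [IsScalarTower k R M] [Module.Finite k M] [IsSemisimpleModule R M]
    (f : Module.End (Module.End R M) M) : ∃ r : R, ∀ m, f m = r • m := by
  have : Module.Finite (Module.End R M) M := Module.Finite.of_restrictScalars_finite k _ M
  obtain ⟨r, hr⟩ := Module.Finite.toModuleEnd_moduleEnd_surjective f
  exact ⟨r, fun m => by rw [← hr]; rfl⟩

theorem exists_smul_eq_zero_and_smul_eq_self (k : Type*) [CommSemiring k] [Algebra k R]
    [Module k M] [IsScalarTower k R M] [Module.Finite k M]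
    [Module k N] [IsScalarTower k R N] [Module.Finite k N]
    [IsSimpleModule R M] [IsSimpleModule R N] (h : ¬Nonempty (M ≃ₗ[R] N)) :
    ∃ r : R, (∀ x : M, r • x = 0) ∧ ∀ y : N, r • y = y := by
  let p : Module.End (Module.End R (M × N)) (M × N) :=
    { toFun := inr R M N ∘ₗ snd R M N
      map_add' := map_add _
      map_smul' g m := (LinearMap.congr_fun (Module.End.commute_inr_comp_snd h g) m).symm }
  obtain ⟨r, hr⟩ := exists_smul_eq_of_isSemisimpleModule k p
  exact ⟨r, fun x => by simpa [p] using (congr_arg Prod.fst (hr (x, 0))).symm,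
    fun y => by simpa [p] using (congr_arg Prod.snd (hr (0, y))).symm⟩

end

/-- Let `R` be an associative `ℂ`-algebra and `E₁, E₂` simple left
`R`-modules, finite-dimensional over `ℂ` (the `ℂ`-action being the restriction of scalars
along `ℂ → R`).  If for every `r : R` the traces of `(r • ·)` on `E₁` and on `E₂` agree,
then `E₁ ≅ E₂` as `R`-modules. -/
theorem statement8 {R E₁ E₂ : Type*} [Ring R] [Algebra ℂ R]
    [AddCommGroup E₁] [Module R E₁] [Module ℂ E₁] [IsScalarTower ℂ R E₁]
    [AddCommGroup E₂] [Module R E₂] [Module ℂ E₂] [IsScalarTower ℂ R E₂]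
    [IsSimpleModule R E₁] [IsSimpleModule R E₂]
    [FiniteDimensional ℂ E₁] [FiniteDimensional ℂ E₂]
    (htr : ∀ r : R,
      LinearMap.trace ℂ E₁ (smulLeftMap E₁ r) = LinearMap.trace ℂ E₂ (smulLeftMap E₂ r)) :
    Nonempty (E₁ ≃ₗ[R] E₂) := by
  by_contra h
  obtain ⟨r, hr₁, hr₂⟩ := exists_smul_eq_zero_and_smul_eq_self ℂ h
  have hE₁ : smulLeftMap E₁ r = 0 := LinearMap.ext hr₁
  have hE₂ : smulLeftMap E₂ r = 1 := LinearMap.ext hr₂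
  have := IsSimpleModule.nontrivial R E₂
  have htr_r := htr r
  rw [hE₁, hE₂, map_zero, LinearMap.trace_one] at htr_r
  exact Module.finrank_pos.ne (by exact_mod_cast htr_r)
end
end

section
/- (Double coset formula / Mackey decomposition for an induced character.) Let G be a finite group, J and H subgroups of G, φ : H → ℂˣ a character, and let Z ⊆ G be a complete set of representatives of the double cosets J\G/H. For z ∈ Z let φ_z denote the character of J ∩ zHz⁻¹ given by φ_z(x) = φ(z⁻¹xz). Then the map α, defined on the ℂ[J]-module obtained from ℂ[G] ⊗_{ℂ[H]} ℂ_φ by restricting the G-action to J, which sends g ⊗ w (for g = jzh with j ∈ J, z ∈ Z, h ∈ H, w ∈ ℂ) to the element j ⊗ φ(h)w in the z-indexed summand, is a well-defined isomorphism of ℂ[J]-modules α : Res_J(ℂ[G] ⊗_{ℂ[H]} ℂ_φ) ≅ ⊕_{z ∈ Z} ℂ[J] ⊗_{ℂ[J ∩ zHz⁻¹]} ℂ_{φ_z}, with inverse given by α⁻¹(j ⊗ w) = jz ⊗ w on the z-indexed summand. -/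
noncomputable section

/-- The subgroup `J ∩ z H z⁻¹` regarded as a subgroup of `J`; its elements are the
`x ∈ J` with `z⁻¹ x z ∈ H`. -/
def interConj {G : Type*} [Group G] (J H : Subgroup G) (z : G) : Subgroup J :=
  (H.comap (MulAut.conj z⁻¹).toMonoidHom).subgroupOf J

/-!
Write `g ∈ G` as `g = j z h` with `z ∈ Z`, `j ∈ J`, `h ∈ H`. The representative `z` is unique,
and any two choices of `(j, h)` differ by `(j, h) ↦ (j u, z⁻¹ u⁻¹ z h)` with
`u ∈ J ∩ zHz⁻¹`; the defining relation of the `z`-summand, `j u ⊗ w = j ⊗ φ(z⁻¹ u z) w`,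
absorbs exactly this ambiguity, so `g ⊗ 1 ↦ j ⊗ φ(h)` is well defined. The inverse
`j ⊗ w ↦ j z ⊗ w` respects the relations because `j u z = j z (z⁻¹ u z)`, and the two maps
are checked to be mutually inverse on the generators `g ⊗ 1` and `j ⊗ 1`.
-/

open MonoidAlgebra (single)
open Submodule.Quotient (mk)

theorem MonoidAlgebra.basis_constr_single {k K M : Type*} [CommSemiring k] [AddCommMonoid M]
    [Module k M] (f : K → M) (g : K) (w : k) :
    (MonoidAlgebra.basis K k).constr k f (single g w) = w • f g := by
  rw [← mul_one w, ← MonoidAlgebra.smul_single', map_smul, mul_one, ← MonoidAlgebra.basis_apply,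
    Module.Basis.constr_basis]

namespace InducedModule

variable {K : Type*} [Group K] {S : Subgroup K} {ψ : S →* ℂˣ}

theorem mk_single_mul (g : K) (h : S) (w : ℂ) :
    (mk (single (g * h) w) : InducedModule S ψ) = mk (single g ((ψ h : ℂ) * w)) := by
  refine (Submodule.Quotient.eq _).2 ?_
  have hrel : single (h : K) 1 - single 1 (ψ h : ℂ) ∈ inducedRel S ψ :=
    Submodule.subset_span ⟨h, rfl⟩
  convert (inducedRel S ψ).smul_mem (single g w) hrel using 1
  rw [smul_eq_mul, mul_sub, MonoidAlgebra.single_mul_single, MonoidAlgebra.single_mul_single,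
    mul_one, mul_one, mul_comm w]

theorem smul_mk_single (c : ℂ) (g : K) (w : ℂ) :
    c • (mk (single g w) : InducedModule S ψ) = mk (single g (c * w)) := by
  rw [← Submodule.Quotient.mk_smul, MonoidAlgebra.smul_single, smul_eq_mul]

variable {M : Type*} [AddCommGroup M] [Module ℂ M]

theorem linearMap_ext {f f' : InducedModule S ψ →ₗ[ℂ] M}
    (h : ∀ g : K, f (mk (single g 1)) = f' (mk (single g 1))) : f = f' := by
  have hcomp : f ∘ₗ (inducedRel S ψ).mkQ.restrictScalars ℂ
      = f' ∘ₗ (inducedRel S ψ).mkQ.restrictScalars ℂ :=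
    (MonoidAlgebra.basis K ℂ).ext fun g => by simpa using h g
  refine LinearMap.ext fun m => ?_
  obtain ⟨x, rfl⟩ := Submodule.Quotient.mk_surjective _ m
  exact LinearMap.congr_fun hcomp x

theorem constr_eq_zero_of_mem_inducedRel (f : K → M)
    (hf : ∀ (g : K) (h : S), f (g * h) = (ψ h : ℂ) • f g)
    {x : MonoidAlgebra ℂ K} (hx : x ∈ inducedRel S ψ) :
    (MonoidAlgebra.basis K ℂ).constr ℂ f x = 0 := by
  set L := (MonoidAlgebra.basis K ℂ).constr ℂ f
  -- `inducedRel` is a left ideal but `ker L` only a subspace: induct on all left multiples of `x`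
  suffices ∀ r, L (r * x) = 0 by simpa using this 1
  induction hx using Submodule.span_induction with
  | mem a ha =>
    obtain ⟨h, rfl⟩ := ha
    suffices L ∘ₗ LinearMap.mulRight ℂ (single (h : K) 1 - single 1 (ψ h : ℂ)) = 0 from
      fun r => LinearMap.congr_fun this r
    refine (MonoidAlgebra.basis K ℂ).ext fun g => ?_
    simp [L, mul_sub, MonoidAlgebra.single_mul_single, MonoidAlgebra.basis_constr_single, hf]
  | zero => simp
  | add a b _ _ ha hb => intro r; rw [mul_add, map_add, ha, hb, add_zero]
  | smul a b _ hb => intro r; rw [smul_eq_mul, ← mul_assoc]; exact hb _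

def lift (f : K → M) (hf : ∀ (g : K) (h : S), f (g * h) = (ψ h : ℂ) • f g) :
    InducedModule S ψ →ₗ[ℂ] M :=
  ((inducedRel S ψ).restrictScalars ℂ).liftQ ((MonoidAlgebra.basis K ℂ).constr ℂ f)
      (fun _ hx => constr_eq_zero_of_mem_inducedRel f hf hx) ∘ₗ
    (Submodule.Quotient.restrictScalarsEquiv ℂ (inducedRel S ψ)).symm.toLinearMap

@[simp]
theorem lift_mk_single (f : K → M) (hf : ∀ (g : K) (h : S), f (g * h) = (ψ h : ℂ) • f g)
    (g : K) (w : ℂ) : lift f hf (mk (single g w)) = w • f g :=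
  MonoidAlgebra.basis_constr_single f g w

end InducedModule

section Mackey

variable {G : Type*} [Group G] {J H : Subgroup G} {φ : H →* ℂˣ}

theorem mem_interConj_iff {z : G} {u : J} : u ∈ interConj J H z ↔ z⁻¹ * u * z ∈ H := by
  simp [interConj, Subgroup.mem_subgroupOf, mul_assoc]

theorem mk_single_eq_of_mul_eq {z : G} {ψ : interConj J H z →* ℂˣ}
    (hψ : ∀ u, ψ u = φ ⟨z⁻¹ * u * z, mem_interConj_iff.1 u.2⟩)
    {j j' : J} {h h' : H} (heq : (j : G) * z * h = j' * z * h') :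
    (mk (single j (φ h : ℂ)) : InducedModule (interConj J H z) ψ) = mk (single j' (φ h' : ℂ)) := by
  have hconj : z⁻¹ * ((j⁻¹ * j' : J) : G) * z = ((h * h'⁻¹ : H) : G) := calc
    _ = z⁻¹ * j⁻¹ * (j' * z * h') * h'⁻¹ := by push_cast; group
    _ = _ := by rw [← heq]; push_cast; group
  have hu : j⁻¹ * j' ∈ interConj J H z := mem_interConj_iff.2 (hconj ▸ (h * h'⁻¹).2)
  have hψu : ψ ⟨j⁻¹ * j', hu⟩ = φ (h * h'⁻¹) := by rw [hψ]; congr 1; exact Subtype.ext hconj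
  calc (mk (single j (φ h : ℂ)) : InducedModule (interConj J H z) ψ)
      = mk (single j ((ψ ⟨j⁻¹ * j', hu⟩ : ℂ) * φ h')) := by
        rw [hψu, ← Units.val_mul, ← map_mul, inv_mul_cancel_right]
    _ = mk (single (j * (j⁻¹ * j')) (φ h' : ℂ)) := (InducedModule.mk_single_mul _ _ _).symm
    _ = mk (single j' (φ h' : ℂ)) := by rw [mul_inv_cancel_left]

variable {Z : Finset G}

variable (J H) in
def IsDoubleCosetTransversal (Z : Finset G) : Prop :=
  ∀ g : G, ∃! z : G, z ∈ Z ∧ ∃ j ∈ J, ∃ h ∈ H, g = j * z * h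

theorem IsDoubleCosetTransversal.surjective_mul_mul (hZ : IsDoubleCosetTransversal J H Z) :
    Function.Surjective fun x : J × {z : G // z ∈ Z} × H => (x.1 : G) * x.2.1 * x.2.2 := by
  intro g
  obtain ⟨z, ⟨hz, j, hj, h, hh, rfl⟩, -⟩ := hZ g
  exact ⟨(⟨j, hj⟩, ⟨z, hz⟩, ⟨h, hh⟩), rfl⟩

theorem IsDoubleCosetTransversal.eq_of_mul_mul_eq (hZ : IsDoubleCosetTransversal J H Z)
    {z z' : {z : G // z ∈ Z}} {j j' : J} {h h' : H} (heq : (j : G) * z * h = j' * z' * h') :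
    z = z' :=
  Subtype.ext <| (hZ _).unique ⟨z.2, j, j.2, h, h.2, rfl⟩ ⟨z'.2, j', j'.2, h', h'.2, heq⟩

variable (Z) (φz : ∀ z : G, interConj J H z →* ℂˣ)

abbrev MackeySum : Type _ :=
  DirectSum {z : G // z ∈ Z} fun z => InducedModule (interConj J H z.1) (φz z.1)

variable {Z φz}

variable (φ φz) in
def IsConjCharFamily : Prop :=
  ∀ z (u : interConj J H z), φz z u = φ ⟨z⁻¹ * u * z, mem_interConj_iff.1 u.2⟩

variable [DecidableEq G]

variable (φ φz) in
def mackeyVec (hZ : IsDoubleCosetTransversal J H Z) (g : G) : MackeySum Z φz :=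
  let x := Function.surjInv hZ.surjective_mul_mul g
  DirectSum.of _ x.2.1 (mk (single x.1 (φ x.2.2 : ℂ)))

theorem mackeyVec_mul_mul (hZ : IsDoubleCosetTransversal J H Z) (hφz : IsConjCharFamily φ φz)
    (j : J) (z : {z : G // z ∈ Z}) (h : H) :
    mackeyVec φ φz hZ (j * z * h) = DirectSum.of _ z (mk (single j (φ h : ℂ))) := by
  have hx := Function.surjInv_eq hZ.surjective_mul_mul ((j : G) * z * h)
  unfold mackeyVec
  generalize Function.surjInv hZ.surjective_mul_mul ((j : G) * z * h) = x at hx ⊢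
  obtain ⟨j', z', h'⟩ := x
  obtain rfl := hZ.eq_of_mul_mul_eq hx
  exact congrArg (DirectSum.of _ z') (mk_single_eq_of_mul_eq (hφz z') hx)

theorem mackeyVec_mul_right (hZ : IsDoubleCosetTransversal J H Z) (hφz : IsConjCharFamily φ φz)
    (g : G) (h : H) : mackeyVec φ φz hZ (g * h) = (φ h : ℂ) • mackeyVec φ φz hZ g := by
  obtain ⟨⟨j, z, h₀⟩, rfl⟩ := hZ.surjective_mul_mul g
  rw [mul_assoc _ (h₀ : G), ← Subgroup.coe_mul, mackeyVec_mul_mul hZ hφz,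
    mackeyVec_mul_mul hZ hφz, ← DirectSum.of_smul, InducedModule.smul_mk_single, map_mul,
    Units.val_mul, mul_comm]

theorem mackeyVec_mul_left_apply (hZ : IsDoubleCosetTransversal J H Z)
    (hφz : IsConjCharFamily φ φz) (j' : J) (g : G) (z : {z : G // z ∈ Z}) :
    mackeyVec φ φz hZ (j' * g) z = (single j' 1 : MonoidAlgebra ℂ J) • mackeyVec φ φz hZ g z := by
  obtain ⟨⟨j, z₀, h⟩, rfl⟩ := hZ.surjective_mul_mul g
  dsimp only
  rw [← mul_assoc, ← mul_assoc, ← Subgroup.coe_mul, mackeyVec_mul_mul hZ hφz,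
    mackeyVec_mul_mul hZ hφz]
  by_cases hz : z₀ = z
  · subst hz
    rw [DirectSum.of_eq_same, DirectSum.of_eq_same, ← Submodule.Quotient.mk_smul, smul_eq_mul,
      MonoidAlgebra.single_mul_single, one_mul]
  · rw [DirectSum.of_eq_of_ne _ _ _ (Ne.symm hz), DirectSum.of_eq_of_ne _ _ _ (Ne.symm hz),
      smul_zero]

def mackeyFwd (hZ : IsDoubleCosetTransversal J H Z) (hφz : IsConjCharFamily φ φz) :
    InducedModule H φ →ₗ[ℂ] MackeySum Z φz :=
  InducedModule.lift (mackeyVec φ φz hZ) (mackeyVec_mul_right hZ hφz)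

def mackeyInvComponent (hφz : IsConjCharFamily φ φz) (z : G) :
    InducedModule (interConj J H z) (φz z) →ₗ[ℂ] InducedModule H φ :=
  InducedModule.lift (fun j : J => mk (single ((j : G) * z) 1)) fun j u => by
    have hu := mem_interConj_iff.1 u.2
    rw [InducedModule.smul_mk_single, hφz, Subgroup.coe_mul,
      show (j : G) * u * z = j * z * (⟨z⁻¹ * u * z, hu⟩ : H) by simp [mul_assoc],
      InducedModule.mk_single_mul]

def mackeyInv (hφz : IsConjCharFamily φ φz) : MackeySum Z φz →ₗ[ℂ] InducedModule H φ :=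
  DirectSum.toModule ℂ _ _ fun z => mackeyInvComponent hφz z.1

theorem mackeyFwd_mk_single_mul_mul (hZ : IsDoubleCosetTransversal J H Z)
    (hφz : IsConjCharFamily φ φz) (z : {z : G // z ∈ Z}) (j : J) (h : H) (w : ℂ) :
    mackeyFwd hZ hφz (mk (single ((j : G) * z * h) w))
      = DirectSum.of _ z (mk (single j ((φ h : ℂ) * w))) := by
  rw [mackeyFwd, InducedModule.lift_mk_single, mackeyVec_mul_mul hZ hφz, ← DirectSum.of_smul,
    InducedModule.smul_mk_single, mul_comm]

theorem mackeyInv_of_mk_single (hφz : IsConjCharFamily φ φz) (z : {z : G // z ∈ Z}) (j : J)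
    (w : ℂ) : mackeyInv hφz (DirectSum.of _ z (mk (single j w))) = mk (single ((j : G) * z) w) := by
  rw [mackeyInv, ← DirectSum.lof_eq_of ℂ, DirectSum.toModule_lof, mackeyInvComponent,
    InducedModule.lift_mk_single, InducedModule.smul_mk_single, mul_one]

theorem mackeyInv_comp_mackeyFwd (hZ : IsDoubleCosetTransversal J H Z)
    (hφz : IsConjCharFamily φ φz) : mackeyInv hφz ∘ₗ mackeyFwd hZ hφz = LinearMap.id := by
  refine InducedModule.linearMap_ext fun g => ?_
  obtain ⟨⟨j, z, h⟩, rfl⟩ := hZ.surjective_mul_mul g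
  rw [LinearMap.comp_apply, mackeyFwd_mk_single_mul_mul hZ hφz, mackeyInv_of_mk_single,
    ← InducedModule.mk_single_mul, LinearMap.id_apply]

theorem mackeyFwd_comp_mackeyInv (hZ : IsDoubleCosetTransversal J H Z)
    (hφz : IsConjCharFamily φ φz) : mackeyFwd hZ hφz ∘ₗ mackeyInv hφz = LinearMap.id := by
  refine DirectSum.linearMap_ext ℂ fun z => ?_
  refine InducedModule.linearMap_ext (S := interConj J H z) (ψ := φz z)
    (M := MackeySum Z φz) fun j => ?_
  have hj : (j : G) * z = j * z * (1 : H) := (mul_one _).symm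
  simp only [LinearMap.comp_apply, DirectSum.lof_eq_of, mackeyInv_of_mk_single, LinearMap.id_apply]
  rw [hj, mackeyFwd_mk_single_mul_mul hZ hφz, map_one, Units.val_one, mul_one]

def mackeyEquiv (hZ : IsDoubleCosetTransversal J H Z) (hφz : IsConjCharFamily φ φz) :
    InducedModule H φ ≃ₗ[ℂ] MackeySum Z φz :=
  LinearEquiv.ofLinearMap (mackeyFwd hZ hφz) (mackeyInv hφz)
    (mackeyFwd_comp_mackeyInv hZ hφz) (mackeyInv_comp_mackeyFwd hZ hφz)

theorem mackeyFwd_single_smul_apply (hZ : IsDoubleCosetTransversal J H Z)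
    (hφz : IsConjCharFamily φ φz) (j' : J) (m : InducedModule H φ) (z : {z : G // z ∈ Z}) :
    mackeyFwd hZ hφz (single (j' : G) (1 : ℂ) • m) z
      = (single j' 1 : MonoidAlgebra ℂ J) • mackeyFwd hZ hφz m z := by
  obtain ⟨x, rfl⟩ := Submodule.Quotient.mk_surjective _ m
  induction x using MonoidAlgebra.induction_linear with
  | zero => simp
  | add p q hp hq =>
    rw [Submodule.Quotient.mk_add, smul_add, map_add, map_add, DirectSum.add_apply,
      DirectSum.add_apply, hp, hq, smul_add]
  | single g w =>
    rw [← Submodule.Quotient.mk_smul, smul_eq_mul, MonoidAlgebra.single_mul_single, one_mul,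
      mackeyFwd, InducedModule.lift_mk_single, InducedModule.lift_mk_single, DirectSum.smul_apply,
      DirectSum.smul_apply, mackeyVec_mul_left_apply hZ hφz, smul_comm]

end Mackey

theorem statement10_general {G : Type*} [Group G] [DecidableEq G]
    (J H : Subgroup G) (φ : H →* ℂˣ) (Z : Finset G)
    (hZ : ∀ g : G, ∃! z : G, z ∈ Z ∧ ∃ j ∈ J, ∃ h ∈ H, g = j * z * h)
    (φz : ∀ z : G, ↥(interConj J H z) →* ℂˣ)
    (hφz : ∀ (z x : G) (hxJ : x ∈ J) (hx : (⟨x, hxJ⟩ : J) ∈ interConj J H z)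
      (hxH : z⁻¹ * x * z ∈ H),
      φz z ⟨⟨x, hxJ⟩, hx⟩ = φ ⟨z⁻¹ * x * z, hxH⟩) :
    ∃ e : InducedModule H φ ≃ₗ[ℂ]
        DirectSum {z : G // z ∈ Z} (fun z => InducedModule (interConj J H z.1) (φz z.1)),
      -- `e` is `J`-equivariant, i.e. an isomorphism of `ℂ[J]`-modules
      (∀ (j' : J) (m : InducedModule H φ) (z : {z : G // z ∈ Z}),
        e ((MonoidAlgebra.single (j' : G) (1:ℂ)) • m) z
          = (MonoidAlgebra.single j' (1:ℂ) : MonoidAlgebra ℂ J) • (e m z)) ∧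
      -- the formula for `α`: for `g = j z h`, `g ⊗ w ↦ j ⊗ φ(h) w` in the `z`-summand
      (∀ (z : {z : G // z ∈ Z}) (j : J) (h : H) (w : ℂ),
        e (Submodule.Quotient.mk (MonoidAlgebra.single ((j : G) * z.1 * (h : G)) w))
          = DirectSum.of
              (fun z : {z : G // z ∈ Z} => InducedModule (interConj J H z.1) (φz z.1)) z
              (Submodule.Quotient.mk (MonoidAlgebra.single j ((φ h : ℂ) * w)))) ∧
      -- the formula for the inverse: `j ⊗ w` in the `z`-summand maps to `(jz) ⊗ w`
      (∀ (z : {z : G // z ∈ Z}) (j : J) (w : ℂ),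
        e.symm (DirectSum.of
            (fun z : {z : G // z ∈ Z} => InducedModule (interConj J H z.1) (φz z.1)) z
            (Submodule.Quotient.mk (MonoidAlgebra.single j w)))
          = Submodule.Quotient.mk (MonoidAlgebra.single ((j : G) * z.1) w)) := by
  have hφz' : IsConjCharFamily φ φz := fun z u => hφz z u u.1.2 u.2 _
  exact ⟨mackeyEquiv hZ hφz', mackeyFwd_single_smul_apply hZ hφz',
    mackeyFwd_mk_single_mul_mul hZ hφz', mackeyInv_of_mk_single hφz'⟩

/-- double coset formula / Mackey decomposition.  Let `G` be a finite
group, `J, H ≤ G`, `φ : H → ℂˣ` a character, `Z` a complete set of representatives of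
`J\G/H`, and for `z ∈ Z` let `φ_z` be the character of `J ∩ zHz⁻¹` with
`φ_z(x) = φ(z⁻¹ x z)`.  Then the map `α` sending `g ⊗ w = (jzh) ⊗ w` to `j ⊗ φ(h)w` in
the `z`-summand is a well-defined `J`-equivariant `ℂ`-linear isomorphism
`Res_J (ℂ[G] ⊗_{ℂ[H]} ℂ_φ) ≅ ⊕_{z ∈ Z} ℂ[J] ⊗_{ℂ[J ∩ zHz⁻¹]} ℂ_{φ_z}`,
with inverse `j ⊗ w ↦ (jz) ⊗ w` on the `z`-summand. -/
theorem statement10 {G : Type*} [Group G] [Fintype G] [DecidableEq G]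
    (J H : Subgroup G) (φ : H →* ℂˣ) (Z : Finset G)
    (hZ : ∀ g : G, ∃! z : G, z ∈ Z ∧ ∃ j ∈ J, ∃ h ∈ H, g = j * z * h)
    (φz : ∀ z : G, ↥(interConj J H z) →* ℂˣ)
    (hφz : ∀ (z x : G) (hxJ : x ∈ J) (hx : (⟨x, hxJ⟩ : J) ∈ interConj J H z)
      (hxH : z⁻¹ * x * z ∈ H),
      φz z ⟨⟨x, hxJ⟩, hx⟩ = φ ⟨z⁻¹ * x * z, hxH⟩) :
    ∃ e : InducedModule H φ ≃ₗ[ℂ]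
        DirectSum {z : G // z ∈ Z} (fun z => InducedModule (interConj J H z.1) (φz z.1)),
      -- `e` is `J`-equivariant, i.e. an isomorphism of `ℂ[J]`-modules
      (∀ (j' : J) (m : InducedModule H φ) (z : {z : G // z ∈ Z}),
        e ((MonoidAlgebra.single (j' : G) (1:ℂ)) • m) z
          = (MonoidAlgebra.single j' (1:ℂ) : MonoidAlgebra ℂ J) • (e m z)) ∧
      -- the formula for `α`: for `g = j z h`, `g ⊗ w ↦ j ⊗ φ(h) w` in the `z`-summand
      (∀ (z : {z : G // z ∈ Z}) (j : J) (h : H) (w : ℂ),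
        e (Submodule.Quotient.mk (MonoidAlgebra.single ((j : G) * z.1 * (h : G)) w))
          = DirectSum.of
              (fun z : {z : G // z ∈ Z} => InducedModule (interConj J H z.1) (φz z.1)) z
              (Submodule.Quotient.mk (MonoidAlgebra.single j ((φ h : ℂ) * w)))) ∧
      -- the formula for the inverse: `j ⊗ w` in the `z`-summand maps to `(jz) ⊗ w`
      (∀ (z : {z : G // z ∈ Z}) (j : J) (w : ℂ),
        e.symm (DirectSum.of
            (fun z : {z : G // z ∈ Z} => InducedModule (interConj J H z.1) (φz z.1)) z
            (Submodule.Quotient.mk (MonoidAlgebra.single j w)))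
          = Submodule.Quotient.mk (MonoidAlgebra.single ((j : G) * z.1) w)) :=
  statement10_general J H φ Z hZ φz hφz
end
end
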